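/- arXiv:2009.04497 — 3 statements merged into one kernel-verified Lean document; each statement's English description precedes it below -/
import Mathlib

section
/- Let μ and η be probability measures on ℝ, with Lebesgue decompositions μ = μ_a + μ_s and η = η_a + η_s into absolutely continuous and singular parts (with respect to Lebesgue measure). If there exists σ > 0 such that the characteristic functions of μ and η coincide on U_σ = {x ∈ ℝ : |x| > σ}, then μ_s = η_s. -/
open MeasureTheory Real Set

/-- The characteristic function of a measure `μ` on `ℝ`: `f(t) = ∫ e^{-itx} dμ(x)`. -/
noncomputable def charFunOfMeasure (μ : Measure ℝ) (t : ℝ) : ℂ :=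
  ∫ x : ℝ, Complex.exp (-(t * x) * Complex.I) ∂μ

/-- The characteristic function of a density `φ`: `f(t) = ∫ e^{-itx} φ(x) dx`. -/
noncomputable def charFunOfDensity (φ : ℝ → ℝ) (t : ℝ) : ℂ :=
  ∫ x : ℝ, Complex.exp (-(t * x) * Complex.I) * (φ x : ℂ)

/-- `g` is the characteristic function of some probability measure on `ℝ`. -/
def IsCharFun (g : ℝ → ℂ) : Prop :=
  ∃ μ : Measure ℝ, IsProbabilityMeasure μ ∧ ∀ t, g t = charFunOfMeasure μ t

/-- `φ` is a probability density on `ℝ`. -/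
def IsProbDensity (φ : ℝ → ℝ) : Prop :=
  Integrable φ ∧ (∀ᵐ x ∂(volume : Measure ℝ), 0 ≤ φ x) ∧ (∫ x, φ x) = 1

/-- The essential support of a measurable function `φ : ℝ → ℝ`. -/
def essSupport (φ : ℝ → ℝ) : Set ℝ :=
  {x : ℝ | ∀ ε > 0, 0 < volume (Ioo (x - ε) (x + ε) ∩ {t : ℝ | 0 < |φ t|})}

/-- The Bernstein space `B¹_σ` of real-valued integrable functions whose Fourier
transform vanishes for `|t| > σ`, identified with their continuous representatives. -/
def MemB1 (σ : ℝ) (F : ℝ → ℝ) : Prop :=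
  Continuous F ∧ Integrable F ∧
    ∀ t : ℝ, σ < |t| → (∫ x : ℝ, Complex.exp (-(t * x) * Complex.I) * (F x : ℂ)) = 0

open scoped ContDiff FourierTransform Manifold ENNReal

/-- A smooth compactly supported real function, complexified, as a Schwartz map. -/
noncomputable def mySchwartz (χ : ℝ → ℝ) (hs : ContDiff ℝ ∞ χ) (hc : HasCompactSupport χ) :
    SchwartzMap ℝ ℂ where
  toFun x := (χ x : ℂ)
  smooth' := Complex.ofRealCLM.contDiff.comp hs
  decay' := by
    intro k n
    have hf : ContDiff ℝ ∞ (fun x : ℝ => (χ x : ℂ)) := Complex.ofRealCLM.contDiff.comp hs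
    have hcs : HasCompactSupport (fun x : ℝ => (χ x : ℂ)) := by
      apply hc.comp_left (g := fun r : ℝ => (r : ℂ)) (by simp)
    have h1 : Continuous fun x : ℝ => ‖x‖ ^ k * ‖iteratedFDeriv ℝ n (fun x : ℝ => (χ x : ℂ)) x‖ := by
      exact ((continuous_norm.pow k)).mul (hf.continuous_iteratedFDeriv (mod_cast le_top)).norm
    have h2 : HasCompactSupport fun x : ℝ => ‖x‖ ^ k * ‖iteratedFDeriv ℝ n (fun x : ℝ => (χ x : ℂ)) x‖ := by
      have := (hcs.iteratedFDeriv (𝕜 := ℝ) n)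
      exact (this.norm).mul_left
    obtain ⟨C, hC⟩ := h1.bounded_above_of_compact_support h2
    exact ⟨C, fun x => (le_abs_self _).trans ((Real.norm_eq_abs _ ▸ hC x))⟩

@[simp] lemma mySchwartz_apply (χ : ℝ → ℝ) (hs : ContDiff ℝ ∞ χ) (hc : HasCompactSupport χ) (x : ℝ) :
    mySchwartz χ hs hc x = (χ x : ℂ) := rfl



lemma norm_charFun_le (μ : Measure ℝ) [IsProbabilityMeasure μ] (t : ℝ) :
    ‖charFunOfMeasure μ t‖ ≤ 1 := by
  rw [charFunOfMeasure]
  calc ‖∫ x : ℝ, Complex.exp (-(t * x) * Complex.I) ∂μ‖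
      ≤ ∫ x : ℝ, ‖Complex.exp (-(t * x) * Complex.I)‖ ∂μ := norm_integral_le_integral_norm _
    _ = ∫ _ : ℝ, (1 : ℝ) ∂μ := by
        congr 1; ext x
        have : (-(t * x) : ℂ) = ((-(t * x) : ℝ) : ℂ) := by push_cast; ring
        rw [this, Complex.norm_exp_ofReal_mul_I]
    _ = 1 := by simp

lemma continuous_charFun (μ : Measure ℝ) [IsProbabilityMeasure μ] :
    Continuous (charFunOfMeasure μ) := by
  apply continuous_of_dominated (bound := fun _ => (1 : ℝ))
  · intro t
    exact (Complex.continuous_exp.comp (by fun_prop)).aestronglyMeasurable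
  · intro t
    filter_upwards with x
    have : (-(t * x) : ℂ) = ((-(t * x) : ℝ) : ℂ) := by push_cast; ring
    rw [this, Complex.norm_exp_ofReal_mul_I]
  · exact integrable_const 1
  · filter_upwards with x
    exact Complex.continuous_exp.comp (by fun_prop)


lemma schwartz_integrable_finite (Φ : SchwartzMap ℝ ℂ) (μ : Measure ℝ) [IsFiniteMeasure μ] :
    Integrable (fun x => Φ x) μ := by
  obtain ⟨C, -, hC⟩ := Φ.decay 0 0
  refine (integrable_const C).mono' Φ.continuous.aestronglyMeasurable ?_
  filter_upwards with x
  simpa using hC x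

lemma norm_exp_two_pi (t x : ℝ) : ‖Complex.exp ((2 * π * (t * x) : ℝ) * Complex.I)‖ = 1 :=
  Complex.norm_exp_ofReal_mul_I _

lemma integral_schwartz_eq (Φ : SchwartzMap ℝ ℂ) (μ : Measure ℝ) [IsProbabilityMeasure μ] :
    ∫ x, Φ x ∂μ
      = ∫ t : ℝ, (SchwartzMap.fourierTransformCLM ℂ Φ) t * charFunOfMeasure μ (-(2 * π * t)) := by
  set G : SchwartzMap ℝ ℂ := SchwartzMap.fourierTransformCLM ℂ Φ with hG
  have hGeq : 𝓕 (⇑Φ) = ⇑G := by rw [hG, SchwartzMap.fourierTransformCLM_apply, SchwartzMap.fourier_coe]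
  have hg : Integrable (⇑G) := G.integrable
  have hinv : ∀ x : ℝ, Φ x = ∫ t : ℝ, Complex.exp ((2 * π * (t * x) : ℝ) * Complex.I) • G t := by
    intro x
    conv_lhs => rw [← Φ.continuous.fourierInv_fourier_eq Φ.integrable (hGeq ▸ hg)]
    rw [Real.fourierInv_eq', hGeq]
    norm_num [RCLike.inner_apply]
    simp_rw [mul_comm (x : ℂ)]
  have hmeas : Continuous (fun p : ℝ × ℝ =>
      Complex.exp ((2 * π * (p.2 * p.1) : ℝ) * Complex.I) • G p.2) := by
    apply Continuous.fun_smul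
    · exact Complex.continuous_exp.comp (by fun_prop)
    · exact G.continuous.comp continuous_snd
  have hint : Integrable (Function.uncurry fun (x t : ℝ) =>
      Complex.exp ((2 * π * (t * x) : ℝ) * Complex.I) • G t) (μ.prod volume) := by
    have huc : (Function.uncurry fun (x t : ℝ) =>
        Complex.exp ((2 * π * (t * x) : ℝ) * Complex.I) • G t)
        = fun p : ℝ × ℝ => Complex.exp ((2 * π * (p.2 * p.1) : ℝ) * Complex.I) • G p.2 := rfl
    rw [huc, integrable_prod_iff hmeas.aestronglyMeasurable]
    constructor
    · filter_upwards with x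
      refine hg.norm.mono' ?_ ?_
      · exact (hmeas.comp (Continuous.prodMk_right x)).aestronglyMeasurable
      · filter_upwards with t
        rw [norm_smul, norm_exp_two_pi, one_mul]
    · have : (fun x : ℝ => ∫ t : ℝ, ‖Complex.exp ((2 * π * (t * x) : ℝ) * Complex.I) • G t‖)
          = fun _ : ℝ => ∫ t : ℝ, ‖G t‖ := by
        funext x
        congr 1; funext t
        rw [norm_smul, norm_exp_two_pi, one_mul]
      rw [this]
      exact integrable_const _
  calc ∫ x, Φ x ∂μ
      = ∫ x, ∫ t : ℝ, Complex.exp ((2 * π * (t * x) : ℝ) * Complex.I) • G t ∂(volume) ∂μ := by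
        congr 1; ext x; exact hinv x
    _ = ∫ t : ℝ, ∫ x, Complex.exp ((2 * π * (t * x) : ℝ) * Complex.I) • G t ∂μ := by
        exact MeasureTheory.integral_integral_swap hint
    _ = ∫ t : ℝ, G t * charFunOfMeasure μ (-(2 * π * t)) := by
        congr 1; funext t
        rw [integral_smul_const, smul_eq_mul, mul_comm]
        congr 1
        rw [charFunOfMeasure]
        congr 1; funext x
        congr 1
        push_cast
        ring

lemma key_bound (μ η : Measure ℝ) [IsProbabilityMeasure μ] [IsProbabilityMeasure η]
    {σ : ℝ} (hσ : 0 < σ)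
    (h : ∀ t : ℝ, σ < |t| → charFunOfMeasure μ t = charFunOfMeasure η t)
    (Φ : SchwartzMap ℝ ℂ) {M : ℝ}
    (hM : ∀ t : ℝ, ‖(SchwartzMap.fourierTransformCLM ℂ Φ) t‖ ≤ M) :
    ‖(∫ x, Φ x ∂μ) - ∫ x, Φ x ∂η‖ ≤ 2 * M * (σ / π) := by
  set G : SchwartzMap ℝ ℂ := SchwartzMap.fourierTransformCLM ℂ Φ with hG
  set D : ℝ → ℂ := fun t => charFunOfMeasure μ (-(2 * π * t)) - charFunOfMeasure η (-(2 * π * t))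
    with hD
  have hDcont : Continuous D :=
    ((continuous_charFun μ).comp (by fun_prop)).sub ((continuous_charFun η).comp (by fun_prop))
  have hDbound : ∀ t, ‖D t‖ ≤ 2 := by
    intro t
    calc ‖D t‖ ≤ ‖charFunOfMeasure μ (-(2 * π * t))‖ + ‖charFunOfMeasure η (-(2 * π * t))‖ :=
          norm_sub_le _ _
      _ ≤ 1 + 1 := add_le_add (norm_charFun_le μ _) (norm_charFun_le η _)
      _ = 2 := by norm_num
  have hDzero : ∀ t : ℝ, σ / (2 * π) < |t| → D t = 0 := by
    intro t ht
    have h2π : (0:ℝ) < 2 * π := by positivity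
    have : σ < |(-(2 * π * t))| := by
      rw [abs_neg, abs_mul, abs_of_pos h2π]
      calc σ = 2 * π * (σ / (2 * π)) := by field_simp
        _ < 2 * π * |t| := by gcongr
    rw [hD]
    simp [h _ this]
  have hint : ∀ (ν : Measure ℝ) [IsProbabilityMeasure ν],
      Integrable (fun t : ℝ => G t * charFunOfMeasure ν (-(2 * π * t))) := by
    intro ν _
    refine G.integrable.norm.mono' ?_ ?_
    · exact (G.continuous.mul ((continuous_charFun ν).comp (by fun_prop))).aestronglyMeasurable
    · filter_upwards with t
      rw [norm_mul]
      calc ‖G t‖ * ‖charFunOfMeasure ν (-(2 * π * t))‖ ≤ ‖G t‖ * 1 := by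
            gcongr; exact norm_charFun_le ν _
        _ = ‖G t‖ := mul_one _
  have hdiff : (∫ x, Φ x ∂μ) - (∫ x, Φ x ∂η) = ∫ t : ℝ, G t * D t := by
    rw [integral_schwartz_eq Φ μ, integral_schwartz_eq Φ η, ← integral_sub (hint μ) (hint η)]
    congr 1; funext t
    rw [hD]; ring
  rw [hdiff]
  set a : ℝ := σ / (2 * π) with ha
  have ha0 : 0 < a := by positivity
  have hMnn : 0 ≤ M := le_trans (norm_nonneg _) (hM 0)
  have hbd : ∀ t : ℝ, ‖G t * D t‖ ≤ (Icc (-a) a).indicator (fun _ => M * 2) t := by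
    intro t
    by_cases hmem : t ∈ Icc (-a) a
    · rw [indicator_of_mem hmem, norm_mul]
      exact mul_le_mul (hM t) (hDbound t) (norm_nonneg _) hMnn
    · rw [indicator_of_notMem hmem]
      have : a < |t| := by
        refine not_le.mp fun hc => hmem ?_
        rw [mem_Icc]
        exact abs_le.mp hc
      rw [hDzero t this, mul_zero, norm_zero]
  calc ‖∫ t : ℝ, G t * D t‖
      ≤ ∫ t : ℝ, (Icc (-a) a).indicator (fun _ => M * 2) t := by
        apply norm_integral_le_of_norm_le
        · exact (integrableOn_const measure_Icc_lt_top.ne).integrable_indicator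
            measurableSet_Icc
        · filter_upwards with t; exact hbd t
    _ = (M * 2) * (volume (Icc (-a) a)).toReal := by
        rw [integral_indicator_const _ measurableSet_Icc, measureReal_def]; simp [mul_comm]
    _ = 2 * M * (σ / π) := by
        rw [Real.volume_Icc, ENNReal.toReal_ofReal (by linarith)]
        have hπ : (π : ℝ) ≠ 0 := ne_of_gt pi_pos
        field_simp [ha]
        rw [ha]; field_simp; norm_num


lemma exists_urysohn_smooth {U : Set ℝ} (hU : IsOpen U) (hUb : Bornology.IsBounded U) {K : Set ℝ}
    (hK : IsCompact K) (hKU : K ⊆ U) :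
    ∃ χ : ℝ → ℝ, ContDiff ℝ ∞ χ ∧ HasCompactSupport χ ∧ (∀ x, χ x ∈ Icc (0:ℝ) 1) ∧
      EqOn χ 1 K ∧ Function.support χ ⊆ U := by
  have hdisj : Disjoint Uᶜ K := Set.disjoint_left.mpr fun x hxc hxK => hxc (hKU hxK)
  obtain ⟨χ, hχ0, hχ1, hχ01⟩ :=
    exists_contMDiffMap_zero_one_of_isClosed 𝓘(ℝ, ℝ) (n := ⊤) hU.isClosed_compl hK.isClosed hdisj
  have hsupp : Function.support ⇑χ ⊆ U := by
    intro x hx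
    by_contra hxU
    exact hx (hχ0 hxU)
  refine ⟨χ, ?_, ?_, hχ01, hχ1, hsupp⟩
  · exact contMDiff_iff_contDiff.mp χ.contMDiff
  · have hcl : IsCompact (closure U) := hUb.isCompact_closure
    exact hcl.of_isClosed_subset isClosed_closure (closure_mono hsupp)

lemma compact_open_bound (μ η : Measure ℝ) [IsProbabilityMeasure μ] [IsProbabilityMeasure η]
    {σ : ℝ} (hσ : 0 < σ)
    (h : ∀ t : ℝ, σ < |t| → charFunOfMeasure μ t = charFunOfMeasure η t)
    {K U : Set ℝ} (hK : IsCompact K) (hU : IsOpen U) (hKU : K ⊆ U)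
    (hUb : Bornology.IsBounded U) :
    (μ K).toReal ≤ (η U).toReal + 2 * (volume U).toReal * (σ / π) := by
  obtain ⟨χ, hχs, hχc, hχ01, hχ1, hχsupp⟩ := exists_urysohn_smooth hU hUb hK hKU
  set Φ : SchwartzMap ℝ ℂ := mySchwartz χ hχs hχc with hΦ
  have hUvol : volume U < ⊤ := hUb.measure_lt_top
  set M : ℝ := (volume U).toReal with hMdef
  -- pointwise comparisons
  have hind_le : ∀ x, K.indicator (fun _ => (1:ℝ)) x ≤ χ x := by
    intro x
    by_cases hx : x ∈ K
    · rw [indicator_of_mem hx]; exact le_of_eq (hχ1 hx).symm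
    · rw [indicator_of_notMem hx]; exact (hχ01 x).1
  have hle_ind : ∀ x, χ x ≤ U.indicator (fun _ => (1:ℝ)) x := by
    intro x
    by_cases hx : x ∈ U
    · rw [indicator_of_mem hx]; exact (hχ01 x).2
    · rw [indicator_of_notMem hx]
      by_contra hc
      exact hx (hχsupp (by simp only [Function.mem_support]; intro h0; rw [h0] at hc; exact hc le_rfl))
  -- integrability
  have hχcont : Continuous χ := hχs.continuous
  have hχint : ∀ (ν : Measure ℝ) [IsFiniteMeasure ν], Integrable χ ν := by
    intro ν _
    refine (integrable_const (1:ℝ)).mono' hχcont.aestronglyMeasurable ?_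
    filter_upwards with x
    rw [Real.norm_eq_abs, abs_of_nonneg (hχ01 x).1]
    exact (hχ01 x).2
  -- Fourier transform bound
  have hM : ∀ t : ℝ, ‖(SchwartzMap.fourierTransformCLM ℂ Φ) t‖ ≤ M := by
    intro t
    rw [SchwartzMap.fourierTransformCLM_apply]
    calc ‖𝓕 (⇑Φ) t‖ ≤ ∫ x, ‖Φ x‖ := by
          exact VectorFourier.norm_fourierIntegral_le_integral_norm _ _ _ _ _
      _ = ∫ x, χ x := by
          congr 1; funext x
          rw [hΦ, mySchwartz_apply, Complex.norm_real, Real.norm_eq_abs,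
            abs_of_nonneg (hχ01 x).1]
      _ ≤ ∫ x, U.indicator (fun _ => (1:ℝ)) x := by
          apply integral_mono (hχcont.integrable_of_hasCompactSupport hχc) ?_ hle_ind
          exact (integrableOn_const hUvol.ne).integrable_indicator hU.measurableSet
      _ = M := by
          rw [integral_indicator_const _ hU.measurableSet, measureReal_def]; simp [hMdef]
  have hMnn : 0 ≤ M := ENNReal.toReal_nonneg
  -- the key bound
  have hkey := key_bound μ η hσ h Φ hM
  -- translate complex integrals to real ones
  have hcast : ∀ (ν : Measure ℝ) [IsProbabilityMeasure ν],
      (∫ x, Φ x ∂ν) = ((∫ x, χ x ∂ν : ℝ) : ℂ) := by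
    intro ν _
    rw [hΦ]
    simp only [mySchwartz_apply]
    exact integral_ofReal
  rw [hcast μ, hcast η] at hkey
  rw [← Complex.ofReal_sub, Complex.norm_real, Real.norm_eq_abs] at hkey
  -- assemble
  have h1 : (μ K).toReal ≤ ∫ x, χ x ∂μ := by
    have : (μ K).toReal = ∫ x, K.indicator (fun _ => (1:ℝ)) x ∂μ := by
      rw [integral_indicator_const _ hK.measurableSet, measureReal_def]; simp
    rw [this]
    refine integral_mono ?_ (hχint μ) hind_le
    exact (integrableOn_const (measure_lt_top μ K).ne).integrable_indicator
      hK.measurableSet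
  have h2 : ∫ x, χ x ∂η ≤ (η U).toReal := by
    have : (η U).toReal = ∫ x, U.indicator (fun _ => (1:ℝ)) x ∂η := by
      rw [integral_indicator_const _ hU.measurableSet, measureReal_def]; simp
    rw [this]
    refine integral_mono (hχint η) ?_ hle_ind
    exact (integrableOn_const (measure_lt_top η U).ne).integrable_indicator
      hU.measurableSet
  have h3 : ∫ x, χ x ∂μ - ∫ x, χ x ∂η ≤ 2 * M * (σ / π) := (le_abs_self _).trans hkey
  linarith


section
variable (μ η : Measure ℝ) [IsProbabilityMeasure μ] [IsProbabilityMeasure η]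

-- we assume the compact-open bound as hypothesis `hco` here to develop the rest
lemma measure_le_on_null
    {σ : ℝ} (hσ : 0 < σ)
    (hco : ∀ {K U : Set ℝ}, IsCompact K → IsOpen U → K ⊆ U → Bornology.IsBounded U →
      (μ K).toReal ≤ (η U).toReal + 2 * (volume U).toReal * (σ / π))
    {N : Set ℝ} (hN : MeasurableSet N) (hvol : volume N = 0) : μ N ≤ η N := by
  have hc : (0:ℝ) < 2 + 2 * (σ / π) := by positivity
  rw [← ENNReal.toReal_le_toReal (measure_ne_top μ N) (measure_ne_top η N)]
  apply le_of_forall_pos_le_add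
  intro δ hδ
  set ε : ℝ := δ / (2 + 2 * (σ / π)) with hε
  have hε0 : 0 < ε := by positivity
  have hεe : (ENNReal.ofReal ε) ≠ 0 := by simp [ENNReal.ofReal_eq_zero, not_le, hε0]
  -- inner regularity for μ
  obtain ⟨K, hKN, hK, hμK⟩ := hN.exists_isCompact_lt_add (μ := μ) (measure_ne_top μ N) hεe
  -- outer regularity for η around K
  obtain ⟨U₁, hKU₁, hU₁o, hηU₁⟩ := K.exists_isOpen_lt_add (μ := η) (measure_ne_top η K) hεe
  -- outer regularity for volume around K
  have hvolK : volume K = 0 := le_antisymm (hvol ▸ measure_mono hKN) zero_le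
  obtain ⟨U₂, hKU₂, hU₂o, hvU₂⟩ := K.exists_isOpen_lt_add (μ := volume)
    (by rw [hvolK]; exact ENNReal.zero_ne_top) hεe
  obtain ⟨R, hKR⟩ := hK.isBounded.subset_ball 0
  set U : Set ℝ := U₁ ∩ U₂ ∩ Metric.ball 0 R with hU
  have hUo : IsOpen U := ((hU₁o.inter hU₂o).inter Metric.isOpen_ball)
  have hKU : K ⊆ U := fun x hx => ⟨⟨hKU₁ hx, hKU₂ hx⟩, hKR hx⟩
  have hUb : Bornology.IsBounded U := Metric.isBounded_ball.subset inter_subset_right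
  have key := hco hK hUo hKU hUb
  -- numeric estimates
  have e1 : (μ N).toReal ≤ (μ K).toReal + ε := by
    have : μ N ≤ μ K + ENNReal.ofReal ε := le_of_lt hμK
    calc (μ N).toReal ≤ ((μ K) + ENNReal.ofReal ε).toReal := by
          apply ENNReal.toReal_mono _ this
          exact ENNReal.add_ne_top.mpr ⟨measure_ne_top μ K, ENNReal.ofReal_ne_top⟩
      _ = (μ K).toReal + ε := by
          rw [ENNReal.toReal_add (measure_ne_top μ K) ENNReal.ofReal_ne_top,
            ENNReal.toReal_ofReal hε0.le]
  have e2 : (η U).toReal ≤ (η N).toReal + ε := by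
    have h1 : η U ≤ η U₁ := measure_mono (fun x hx => hx.1.1)
    have h2 : η U₁ ≤ η K + ENNReal.ofReal ε := le_of_lt hηU₁
    have h3 : η K ≤ η N := measure_mono hKN
    calc (η U).toReal ≤ ((η N) + ENNReal.ofReal ε).toReal := by
          apply ENNReal.toReal_mono
          · exact ENNReal.add_ne_top.mpr ⟨measure_ne_top η N, ENNReal.ofReal_ne_top⟩
          · exact h1.trans (h2.trans (add_le_add h3 le_rfl))
      _ = (η N).toReal + ε := by
          rw [ENNReal.toReal_add (measure_ne_top η N) ENNReal.ofReal_ne_top,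
            ENNReal.toReal_ofReal hε0.le]
  have e3 : (volume U).toReal ≤ ε := by
    have h1 : volume U ≤ volume U₂ := measure_mono (fun x hx => hx.1.2)
    have h2 : volume U₂ ≤ ENNReal.ofReal ε := by
      have := le_of_lt hvU₂
      rwa [hvolK, zero_add] at this
    calc (volume U).toReal ≤ (ENNReal.ofReal ε).toReal :=
          ENNReal.toReal_mono ENNReal.ofReal_ne_top (h1.trans h2)
      _ = ε := ENNReal.toReal_ofReal hε0.le
  have hσπ : 0 ≤ σ / π := by positivity
  have : (μ N).toReal ≤ (η N).toReal + (2 + 2 * (σ / π)) * ε := by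
    have := key
    nlinarith [mul_le_mul_of_nonneg_right e3 hσπ]
  calc (μ N).toReal ≤ (η N).toReal + (2 + 2 * (σ / π)) * ε := this
    _ = (η N).toReal + δ := by
        rw [hε]; field_simp
end

theorem final_step (μ η : Measure ℝ) [IsProbabilityMeasure μ] [IsProbabilityMeasure η]
    (hnull : ∀ N : Set ℝ, MeasurableSet N → volume N = 0 → μ N = η N) :
    μ.singularPart volume = η.singularPart volume := by
  obtain ⟨Sμ, hSμm, hSμ1, hSμ2⟩ := μ.mutuallySingular_singularPart volume
  obtain ⟨Sη, hSηm, hSη1, hSη2⟩ := η.mutuallySingular_singularPart volume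
  set S : Set ℝ := Sμᶜ ∪ Sηᶜ with hS
  have hSm : MeasurableSet S := hSμm.compl.union hSηm.compl
  have hSvol : volume S = 0 := le_antisymm
    (le_trans (measure_union_le _ _) (by rw [hSμ2, hSη2, add_zero])) zero_le
  have key : ∀ (ν : Measure ℝ) [IsFiniteMeasure ν] (Sν : Set ℝ), MeasurableSet Sν →
      ν.singularPart volume Sν = 0 → Sᶜ ⊆ Sν →
      ∀ A : Set ℝ, MeasurableSet A → ν.singularPart volume A = ν (A ∩ S) := by
    intro ν _ Sν hSνm hSν1 hSνsub A hA
    have hd : ν (A ∩ S) = ν.singularPart volume (A ∩ S)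
        + volume.withDensity (ν.rnDeriv volume) (A ∩ S) := by
      conv_lhs => rw [ν.haveLebesgueDecomposition_add volume]
      simp [Measure.add_apply]
    have hwd : volume.withDensity (ν.rnDeriv volume) (A ∩ S) = 0 := by
      apply withDensity_absolutelyContinuous volume (ν.rnDeriv volume)
      exact le_antisymm (le_trans (measure_mono inter_subset_right) hSvol.le) zero_le
    have hsplit : ν.singularPart volume A = ν.singularPart volume (A ∩ S) := by
      have h1 : ν.singularPart volume (A \ S) = 0 := by
        refine le_antisymm (le_trans (measure_mono ?_) hSν1.le) zero_le
        exact fun x hx => hSνsub hx.2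
      have := measure_inter_add_diff (μ := ν.singularPart volume) A hSm
      rw [h1, add_zero] at this
      exact this.symm
    rw [hsplit, hd, hwd, add_zero]
  have hsub1 : Sᶜ ⊆ Sμ := by
    rw [hS, compl_union, compl_compl, compl_compl]; exact inter_subset_left
  have hsub2 : Sᶜ ⊆ Sη := by
    rw [hS, compl_union, compl_compl, compl_compl]; exact inter_subset_right
  ext A hA
  rw [key μ Sμ hSμm hSμ1 hsub1 A hA, key η Sη hSηm hSη1 hsub2 A hA]
  exact hnull (A ∩ S) (hA.inter hSm)
    (le_antisymm (le_trans (measure_mono inter_subset_right) hSvol.le) zero_le)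

/-- If the characteristic functions of two probability measures on ℝ
coincide on some neighbourhood of infinity `U_σ = {x : |x| > σ}`, then their singular
parts (w.r.t. Lebesgue measure) coincide. -/
theorem singularPart_eq_of_charFun_eqOn_nbhd_infty
    (μ η : Measure ℝ) [IsProbabilityMeasure μ] [IsProbabilityMeasure η]
    (h : ∃ σ : ℝ, 0 < σ ∧ ∀ t : ℝ, σ < |t| → charFunOfMeasure μ t = charFunOfMeasure η t) :
    μ.singularPart volume = η.singularPart volume := by
  obtain ⟨σ, hσ, h⟩ := h
  apply final_step
  intro N hN hvol
  refine le_antisymm ?_ ?_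
  · exact measure_le_on_null μ η hσ
      (fun hK hU hKU hUb => compact_open_bound μ η hσ h hK hU hKU hUb) hN hvol
  · exact measure_le_on_null η μ hσ
      (fun hK hU hKU hUb =>
        compact_open_bound η μ hσ (fun t ht => (h t ht).symm) hK hU hKU hUb) hN hvol
end

section
/- Let σ > 0 and let F ∈ B¹_σ satisfy ∫_ℝ F(x) dx = 0 and F(x) ≤ χ_{[0, 2π/σ]}(x) for all x ∈ ℝ, where χ_{[0, 2π/σ]} is the indicator function of [0, 2π/σ]. Then the derivative of F satisfies F′(2πn/σ) = 0 for every n ∈ ℤ \\ {0, 1}. -/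
/-!
Write `T = 2π/σ`. The Fourier transform of `F` is continuous and vanishes for `|t| > σ`, hence
also at `t = ±σ`; it vanishes at `t = 0` because `∫ F = 0`. So it vanishes at every multiple
of `σ`, i.e. all Fourier coefficients of the `T`-periodisation of `F` are zero, and by density
of trigonometric polynomials `∫ τ F = 0` for every continuous `T`-periodic `τ`.

Testing this against narrow periodic tents centred at the lattice `Tℤ`, and using `F ≤ 0` near
every lattice point `kT` with `k ∉ {0, 1, n}`, gives `F 0 + F T + F (nT) ≥ 0`. All three values
are `≤ 0` because `F ≤ 0` off `(0, T)`, so `F (nT) = 0`; as `F ≤ 0` near `nT`, this is a local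
maximum and the derivative vanishes there.
-/

open MeasureTheory Real Set

open Filter Topology

lemma continuous_integral_exp_mul {F : ℝ → ℂ} (hF : Integrable F) :
    Continuous fun t : ℝ => ∫ x : ℝ, Complex.exp (-(t * x) * Complex.I) * F x := by
  refine continuous_of_dominated (bound := fun x => ‖F x‖) (fun t => ?_) (fun t => ?_) hF.norm ?_
  · exact (Continuous.aestronglyMeasurable (by fun_prop)).mul hF.aestronglyMeasurable
  · exact ae_of_all _ fun x => by simp [Complex.norm_exp]
  · exact ae_of_all _ fun x => by fun_prop

lemma eq_zero_of_le_abs_of_continuous {E : Type*} [TopologicalSpace E] [T2Space E] [Zero E]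
    {H : ℝ → E} (hH : Continuous H) {σ t : ℝ} (hσ : 0 < σ) (hvan : ∀ s, σ < |s| → H s = 0)
    (ht : σ ≤ |t|) : H t = 0 := by
  have hlim : Tendsto (fun s : ℝ => H (s * t)) (𝓝[>] 1) (𝓝 (H t)) := by
    have hcont := (hH.comp (continuous_mul_const t)).tendsto 1
    simp only [Function.comp_def, one_mul] at hcont
    exact hcont.mono_left nhdsWithin_le_nhds
  have hzero : (fun _ => (0 : E)) =ᶠ[𝓝[>] 1] fun s : ℝ => H (s * t) := by
    filter_upwards [self_mem_nhdsWithin] with s (hs : 1 < s)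
    refine (hvan _ ?_).symm
    rw [abs_mul, abs_of_pos (one_pos.trans hs)]
    nlinarith [hσ.trans_le ht]
  exact tendsto_nhds_unique hlim (tendsto_const_nhds.congr' hzero)

lemma MemB1.integral_exp_int_mul_eq_zero {σ : ℝ} (hσ : 0 < σ) {F : ℝ → ℝ} (hF : MemB1 σ F)
    (hint : ∫ x, F x = 0) (k : ℤ) :
    ∫ x : ℝ, Complex.exp (-((k * σ : ℝ) * x) * Complex.I) * (F x : ℂ) = 0 := by
  rcases eq_or_ne k 0 with rfl | hk
  · simp [integral_complex_ofReal, hint]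
  · refine eq_zero_of_le_abs_of_continuous (continuous_integral_exp_mul hF.2.1.ofReal) hσ
      hF.2.2 ?_
    rw [abs_mul, abs_of_pos hσ]
    exact le_mul_of_one_le_left hσ.le (by exact_mod_cast Int.one_le_abs hk)

lemma fourier_coe_two_pi_div (σ : ℝ) (k : ℤ) (x : ℝ) :
    fourier k (x : AddCircle (2 * π / σ)) =
      Complex.exp (-(((-k : ℤ) * σ : ℝ) * x) * Complex.I) := by
  rw [fourier_coe_apply]
  congr 1
  push_cast
  field_simp

lemma MemB1.integral_fourier_mul_eq_zero {σ : ℝ} (hσ : 0 < σ) {F : ℝ → ℝ} (hF : MemB1 σ F)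
    (hint : ∫ x, F x = 0) (k : ℤ) :
    ∫ x : ℝ, fourier k (x : AddCircle (2 * π / σ)) * (F x : ℂ) = 0 := by
  simp_rw [fourier_coe_two_pi_div σ k]
  exact hF.integral_exp_int_mul_eq_zero hσ hint (-k)

section AddCircle

variable {T : ℝ} [Fact (0 < T)]

lemma integrable_comp_coe_mul {𝕜 : Type*} [NormedRing 𝕜] {F : ℝ → 𝕜} (hF : Integrable F)
    (p : C(AddCircle T, 𝕜)) : Integrable fun x : ℝ => p x * F x :=
  hF.bdd_mul (p.continuous.comp (AddCircle.continuous_mk' T)).aestronglyMeasurable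
    (ae_of_all _ fun x => p.norm_coe_le_norm x)

noncomputable def integralMulCLM {F : ℝ → ℂ} (hF : Integrable F) : C(AddCircle T, ℂ) →L[ℂ] ℂ :=
  LinearMap.mkContinuous
    { toFun := fun p => ∫ x : ℝ, p x * F x
      map_add' := fun p q => by
        simp only [ContinuousMap.add_apply, add_mul]
        exact integral_add (integrable_comp_coe_mul hF p) (integrable_comp_coe_mul hF q)
      map_smul' := fun c p => by
        simp only [ContinuousMap.smul_apply, smul_eq_mul, mul_assoc, integral_const_mul,
          RingHom.id_apply] }
    (∫ x, ‖F x‖) fun p => by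
      rw [mul_comm, ← integral_const_mul]
      refine norm_integral_le_of_norm_le (hF.norm.const_mul _) (ae_of_all _ fun x => ?_)
      rw [norm_mul]
      exact mul_le_mul_of_nonneg_right (p.norm_coe_le_norm _) (norm_nonneg _)

theorem integral_comp_coe_mul_eq_zero_of_fourier {F : ℝ → ℂ} (hF : Integrable F)
    (hfourier : ∀ k : ℤ, ∫ x : ℝ, fourier k (x : AddCircle T) * F x = 0)
    (p : C(AddCircle T, ℂ)) : ∫ x : ℝ, p x * F x = 0 := by
  have hdense : Dense (Submodule.span ℂ (range (@fourier T)) : Set C(AddCircle T, ℂ)) :=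
    Submodule.dense_iff_topologicalClosure_eq_top.2 span_fourier_closure_eq_top
  have hzero : integralMulCLM hF = 0 :=
    ContinuousLinearMap.ext_on hdense (by rintro _ ⟨k, rfl⟩; exact hfourier k)
  exact DFunLike.congr_fun hzero p

end AddCircle

lemma MemB1.integral_addCircle_mul_eq_zero {σ : ℝ} (hσ : 0 < σ) {F : ℝ → ℝ} (hF : MemB1 σ F)
    (hint : ∫ x, F x = 0) (τ : C(AddCircle (2 * π / σ), ℝ)) : ∫ x : ℝ, τ x * F x = 0 := by
  have : Fact (0 < 2 * π / σ) := ⟨by positivity⟩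
  have h := integral_comp_coe_mul_eq_zero_of_fourier hF.2.1.ofReal
    (hF.integral_fourier_mul_eq_zero hσ hint) ⟨fun z => (τ z : ℂ), by fun_prop⟩
  rw [← Complex.ofReal_eq_zero, ← integral_complex_ofReal]
  simpa using h

noncomputable def tent (r c x : ℝ) : ℝ := max 0 (r - |x - c|)

lemma tent_nonneg (r c x : ℝ) : 0 ≤ tent r c x := le_max_left _ _

lemma continuous_tent (r c : ℝ) : Continuous (tent r c) := by
  unfold tent; fun_prop

lemma tent_pos_iff {r c x : ℝ} : 0 < tent r c x ↔ |x - c| < r := by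
  simp [tent]

lemma hasCompactSupport_tent (r c : ℝ) : HasCompactSupport (tent r c) := by
  refine HasCompactSupport.intro (isCompact_closedBall c r) fun x hx => ?_
  rw [Metric.mem_closedBall, Real.dist_eq, not_le] at hx
  exact max_eq_left (by linarith)

lemma integrable_tent (r c : ℝ) : Integrable (tent r c) :=
  (continuous_tent r c).integrable_of_hasCompactSupport (hasCompactSupport_tent r c)

lemma integral_tent (r c : ℝ) : ∫ x, tent r c x = ∫ x, tent r 0 x := by
  simpa [tent] using integral_sub_right_eq_self (tent r 0) c

lemma integral_tent_pos {r : ℝ} (hr : 0 < r) : 0 < ∫ x, tent r 0 x :=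
  (continuous_tent r 0).integral_pos_of_hasCompactSupport_nonneg_nonzero (x := 0)
    (hasCompactSupport_tent r 0) (tent_nonneg r 0) (by simp [tent, hr])

lemma tent_mul_le {r c x b : ℝ} {F : ℝ → ℝ} (h : |x - c| < r → F x ≤ b) :
    tent r c x * F x ≤ tent r c x * b := by
  rcases (tent_nonneg r c x).eq_or_lt with h0 | hpos
  · rw [← h0, zero_mul, zero_mul]
  · exact mul_le_mul_of_nonneg_left (h (tent_pos_iff.1 hpos)) hpos.le

lemma round_div_eq_of_abs_sub_mul_lt {T y : ℝ} {k : ℤ} (hT : 0 < T) (h : |y - k * T| < T / 2) :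
    round (y / T) = k := by
  rw [round_eq_iff, mem_Ico, le_div_iff₀ hT, div_lt_iff₀ hT]
  constructor <;> linarith [abs_lt.1 h]

noncomputable def periodicTent (T r x₀ : ℝ) : C(AddCircle T, ℝ) :=
  ⟨fun z => max 0 (r - ‖z - (x₀ : AddCircle T)‖), by fun_prop⟩

lemma periodicTent_coe (T r x₀ x : ℝ) :
    periodicTent T r x₀ x = tent r (x₀ + round ((x - x₀) / T) * T) x := by
  rw [periodicTent, ContinuousMap.coe_mk, ← AddCircle.coe_sub, AddCircle.norm_eq, tent,
    inv_mul_eq_div, sub_sub]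

lemma tent_lattice_eq_zero {T r x₀ x : ℝ} (hT : 0 < T) (hrT : r ≤ T / 2) {k : ℤ}
    (hk : k ≠ round ((x - x₀) / T)) : tent r (x₀ + k * T) x = 0 := by
  refine (tent_nonneg _ _ _).antisymm' (not_lt.1 fun hpos => hk ?_)
  refine (round_div_eq_of_abs_sub_mul_lt hT ?_).symm
  rw [sub_sub]
  linarith [tent_pos_iff.1 hpos]

theorem sum_nonneg_of_le_near_lattice {T : ℝ} (hT : 0 < T) {F : ℝ → ℝ}
    (hFi : Integrable F) (hF : ∀ τ : C(AddCircle T, ℝ), ∫ x : ℝ, τ x * F x = 0)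
    {x₀ r : ℝ} (hr : 0 < r) (hrT : r ≤ T / 2) (S : Finset ℤ) (a : ℤ → ℝ)
    (hS : ∀ k ∈ S, ∀ y, |y - (x₀ + k * T)| < r → F y ≤ a k)
    (hSc : ∀ k ∉ S, ∀ y, |y - (x₀ + k * T)| < r → F y ≤ 0) :
    0 ≤ ∑ k ∈ S, a k := by
  have : Fact (0 < T) := ⟨hT⟩
  have hpt : ∀ x : ℝ, periodicTent T r x₀ x * F x ≤ ∑ k ∈ S, a k * tent r (x₀ + k * T) x := by
    intro x
    rw [periodicTent_coe]
    set k := round ((x - x₀) / T)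
    have hothers : ∀ j ≠ k, a j * tent r (x₀ + j * T) x = 0 := fun j hj => by
      rw [tent_lattice_eq_zero hT hrT hj, mul_zero]
    by_cases hk : k ∈ S
    · rw [Finset.sum_eq_single_of_mem k hk fun j _ hj => hothers j hj, mul_comm (a k)]
      exact tent_mul_le (hS k hk x)
    · rw [Finset.sum_eq_zero fun j hj => hothers j (ne_of_mem_of_not_mem hj hk)]
      simpa using tent_mul_le (hSc k hk x)
  have hintegral : 0 ≤ (∑ k ∈ S, a k) * ∫ x, tent r 0 x :=
    calc 0 = ∫ x : ℝ, periodicTent T r x₀ x * F x := (hF _).symm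
      _ ≤ ∫ x, ∑ k ∈ S, a k * tent r (x₀ + k * T) x :=
        integral_mono (integrable_comp_coe_mul hFi _)
          (integrable_finsetSum _ fun k _ => (integrable_tent _ _).const_mul _) hpt
      _ = (∑ k ∈ S, a k) * ∫ x, tent r 0 x := by
        rw [integral_finsetSum _ fun k _ => (integrable_tent _ _).const_mul _, Finset.sum_mul]
        simp only [integral_const_mul, integral_tent]
  exact nonneg_of_mul_nonneg_left hintegral (integral_tent_pos hr)

lemma eventually_nhdsGT_forall_abs_sub_lt {p : ℝ → Prop} {c : ℝ} (h : ∀ᶠ y in 𝓝 c, p y) :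
    ∀ᶠ r in 𝓝[>] (0 : ℝ), ∀ y, |y - c| < r → p y := by
  obtain ⟨ε, hε, hp⟩ := Metric.eventually_nhds_iff.1 h
  filter_upwards [Ioo_mem_nhdsGT hε] with r hr y hy
  exact hp (by rw [Real.dist_eq]; exact hy.trans hr.2)

theorem sum_apply_lattice_nonneg {T : ℝ} (hT : 0 < T) {F : ℝ → ℝ}
    (hFc : Continuous F) (hFi : Integrable F)
    (hF : ∀ τ : C(AddCircle T, ℝ), ∫ x : ℝ, τ x * F x = 0) (x₀ : ℝ) (S : Finset ℤ) {ε : ℝ}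
    (hε : 0 < ε) (hSc : ∀ k ∉ S, ∀ y, |y - (x₀ + k * T)| < ε → F y ≤ 0) :
    0 ≤ ∑ k ∈ S, F (x₀ + k * T) := by
  have hlim : Tendsto (fun δ : ℝ => ∑ k ∈ S, (F (x₀ + k * T) + δ)) (𝓝[>] 0)
      (𝓝 (∑ k ∈ S, (F (x₀ + k * T) + 0))) :=
    (tendsto_finsetSum S fun k _ => tendsto_const_nhds.add tendsto_id).mono_left
      nhdsWithin_le_nhds
  simp only [add_zero] at hlim
  refine ge_of_tendsto hlim ?_
  filter_upwards [self_mem_nhdsWithin] with δ (hδ : 0 < δ)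
  have hr : ∀ᶠ r in 𝓝[>] (0 : ℝ), r ∈ Ioo 0 (min ε (T / 2)) ∧
      ∀ k ∈ S, ∀ y, |y - (x₀ + k * T)| < r → F y ≤ F (x₀ + k * T) + δ :=
    Eventually.and (Ioo_mem_nhdsGT (lt_min hε (half_pos hT))) <|
      (eventually_all_finset S).2 fun k _ => eventually_nhdsGT_forall_abs_sub_lt <|
        hFc.continuousAt.eventually (Iic_mem_nhds (lt_add_of_pos_right _ hδ))
  obtain ⟨r, ⟨hr0, hrε⟩, hS⟩ := hr.exists
  exact sum_nonneg_of_le_near_lattice hT hFi hF hr0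
    (hrε.le.trans (min_le_right _ _)) S _ hS
    fun k hk y hy => hSc k hk y (hy.trans (hrε.trans_le (min_le_left _ _)))

lemma nonpos_of_notMem_Ioo {F : ℝ → ℝ} (hF : Continuous F) {a b : ℝ}
    (h : ∀ x ∉ Icc a b, F x ≤ 0) : ∀ x ∉ Ioo a b, F x ≤ 0 := by
  have hsub : closure (Icc a b)ᶜ ⊆ {x | F x ≤ 0} :=
    closure_minimal (fun x hx => h x hx) (isClosed_le hF continuous_const)
  rwa [closure_compl, interior_Icc] at hsub

lemma notMem_Ioo_of_abs_sub_int_mul_lt {T y : ℝ} (hT : 0 < T) {k : ℤ} (hk0 : k ≠ 0) (hk1 : k ≠ 1)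
    (hy : |y - k * T| < T) : y ∉ Ioo 0 T := by
  rintro ⟨hy0, hyT⟩
  have := abs_lt.1 hy
  rcases le_or_gt k 0 with hk | hk
  · have : (k : ℝ) ≤ -1 := by exact_mod_cast (by omega : k ≤ -1)
    nlinarith
  · have : (2 : ℝ) ≤ k := by exact_mod_cast (by omega : 2 ≤ k)
    nlinarith

/-- vanishing of the derivative at lattice points (claim (2.18)). -/
theorem memB1_deriv_vanishes_at_lattice_points
    (σ : ℝ) (hσ : 0 < σ) (F : ℝ → ℝ) (hF : MemB1 σ F)
    (hint : (∫ x, F x) = 0)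
    (hle : ∀ x : ℝ, F x ≤ Set.indicator (Icc 0 (2 * π / σ)) 1 x) :
    ∀ n : ℤ, n ≠ 0 → n ≠ 1 → deriv F (2 * π * (n : ℝ) / σ) = 0 := by
  intro n hn0 hn1
  set T := 2 * π / σ
  have hT : 0 < T := by positivity
  have hout : ∀ x ∉ Ioo 0 T, F x ≤ 0 :=
    nonpos_of_notMem_Ioo hF.1 fun x hx => by simpa [indicator_of_notMem hx] using hle x
  have hlattice : ∀ k : ℤ, k ≠ 0 → k ≠ 1 → ∀ y, |y - k * T| < T → F y ≤ 0 :=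
    fun k hk0 hk1 y hy => hout y (notMem_Ioo_of_abs_sub_int_mul_lt hT hk0 hk1 hy)
  have hsum : 0 ≤ F 0 + F T + F (n * T) := by
    have h := sum_apply_lattice_nonneg hT hF.1 hF.2.1
      (hF.integral_addCircle_mul_eq_zero hσ hint) 0 {0, 1, n} hT
      fun k hk y hy => by
        simp only [Finset.mem_insert, Finset.mem_singleton, not_or] at hk
        exact hlattice k hk.1 hk.2.1 y (by simpa using hy)
    simpa [Finset.sum_insert, hn0.symm, hn1.symm, add_assoc] using h
  have hFn : F (n * T) = 0 := by
    linarith [hout 0 (by simp), hout T (by simp), hout (n * T)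
      (notMem_Ioo_of_abs_sub_int_mul_lt hT hn0 hn1 (by simpa using hT))]
  have hmax : IsLocalMax F (n * T) := by
    filter_upwards [Metric.ball_mem_nhds (n * T) hT] with y hy
    exact hFn ▸ hlattice n hn0 hn1 y hy
  rw [show 2 * π * (n : ℝ) / σ = n * T by ring]
  exact hmax.deriv_eq_zero
end

section
/- Let σ > 0 and let φ be a continuous probability density. Suppose there are α < β with β − α > 2π/σ such that φ(x) > 0 for all x ∈ (α, β). Then there exists G ∈ B¹_σ with G ≢ 0, ∫_ℝ G(x) dx = 0, and G(x) ≤ φ(x) for all x ∈ ℝ; consequently φ − G is a probability density whose characteristic function agrees with that of φ on {|t| > σ}. -/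
open MeasureTheory Real Set

/-!
Put `w = σ / (4π)` and let `a < b` be the points at distance `π / σ` from the midpoint of `(α, β)`,
so that `2w (b - a) = 1`. The function `P x = (2w)² sinc (2πw (x - a)) sinc (2πw (x - b))` is the
Fourier transform of the convolution of the two modulated indicators
`ξ ↦ 1_{[-w, w]}(ξ) e^{2πi a ξ}` and `ξ ↦ 1_{[-w, w]}(ξ) e^{2πi b ξ}`. That convolution is continuous
and supported in `[-2w, 2w]`, so by Fourier inversion the spectrum of `P` lies in `|t| ≤ σ`, and
`∫ P` is its value at `0`, namely `2w sinc π = 0`. The two sinc factors are half a period out of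
phase, so `P = -(2w)² sin² y / (y (y - π))` with `y = 2πw (x - a)`: it is `≤ 0` off `[a, b]` and
positive at the midpoint. As `φ` has a positive minimum on `[a, b] ⊂ (α, β)`, `G = εP` works for
small `ε > 0`.
-/

open scoped FourierTransform Convolution

namespace Real

lemma sinc_sq_le_two_mul_inv_one_add_sq (y : ℝ) : sinc y ^ 2 ≤ 2 * (1 + y ^ 2)⁻¹ := by
  rw [← div_eq_mul_inv, le_div_iff₀ (by positivity)]
  rcases le_or_gt (y ^ 2) 1 with hy | hy
  · nlinarith [abs_sinc_le_one y, sq_abs (sinc y), sq_nonneg (sinc y), abs_nonneg (sinc y)]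
  · have hy0 : y ≠ 0 := by rintro rfl; norm_num at hy
    have hsin : sin y ^ 2 ≤ 1 := by nlinarith [sin_sq_add_cos_sq y, sq_nonneg (cos y)]
    rw [sinc_of_ne_zero hy0, div_pow, div_mul_eq_mul_div, div_le_iff₀ (by positivity)]
    nlinarith [sq_nonneg (sin y)]

lemma integrable_sinc_sq : Integrable fun y => sinc y ^ 2 :=
  (integrable_inv_one_add_sq.const_mul 2).mono' (by fun_prop) <| .of_forall fun y => by
    rw [norm_of_nonneg (sq_nonneg _)]
    exact sinc_sq_le_two_mul_inv_one_add_sq y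

lemma integrable_sinc_mul_sinc {k : ℝ} (hk : k ≠ 0) (a b : ℝ) :
    Integrable fun x => sinc (k * (x - a)) * sinc (k * (x - b)) := by
  have hsq (c : ℝ) : Integrable fun x => sinc (k * (x - c)) ^ 2 :=
    (integrable_sinc_sq.comp_mul_left' hk).comp_sub_right c
  refine ((hsq a).add (hsq b)).mono' (by fun_prop) <| .of_forall fun x => ?_
  rw [Pi.add_apply, norm_mul, norm_eq_abs, norm_eq_abs]
  nlinarith [sq_abs (sinc (k * (x - a))), sq_abs (sinc (k * (x - b))),
    sq_nonneg (|sinc (k * (x - a))| - |sinc (k * (x - b))|)]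

lemma sinc_mul_sinc_sub_pi {y : ℝ} (h0 : y ≠ 0) (hπ : y ≠ π) :
    sinc y * sinc (y - π) = -(sin y ^ 2 / (y * (y - π))) := by
  rw [sinc_of_ne_zero h0, sinc_of_ne_zero (sub_ne_zero.2 hπ), sin_sub_pi, mul_comm y]
  field_simp

lemma sinc_mul_sinc_sub_pi_nonpos {y : ℝ} (hy : y ∉ Ioo 0 π) : sinc y * sinc (y - π) ≤ 0 := by
  rcases eq_or_ne y 0 with rfl | h0
  · simp [sinc_of_ne_zero pi_ne_zero]
  rcases eq_or_ne y π with rfl | hπ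
  · simp [sinc_of_ne_zero pi_ne_zero]
  rw [sinc_mul_sinc_sub_pi h0 hπ, neg_nonpos]
  refine div_nonneg (sq_nonneg _) ?_
  rw [mem_Ioo, not_and_or, not_lt, not_lt] at hy
  rcases hy with hy | hy
  · exact mul_nonneg_of_nonpos_of_nonpos hy (by linarith [pi_pos])
  · exact mul_nonneg (by linarith [pi_pos]) (by linarith)

lemma sinc_mul_sinc_sub_pi_pos {y : ℝ} (hy : y ∈ Ioo 0 π) : 0 < sinc y * sinc (y - π) := by
  rw [sinc_mul_sinc_sub_pi hy.1.ne' hy.2.ne, neg_pos]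
  exact div_neg_of_pos_of_neg (pow_pos (sin_pos_of_pos_of_lt_pi hy.1 hy.2) 2)
    (mul_neg_of_pos_of_neg hy.1 (by linarith [hy.2]))

end Real

lemma integral_exp_const_mul_mul_I_eq_sinc (k w : ℝ) :
    ∫ ξ in -w..w, Complex.exp (↑(k * ξ) * Complex.I) = 2 * w * sinc (k * w) := by
  rcases eq_or_ne k 0 with rfl | hk
  · simp only [zero_mul, Complex.ofReal_zero, Complex.exp_zero, intervalIntegral.integral_const,
      sub_neg_eq_add, Complex.real_smul, Complex.ofReal_add, mul_one, sinc_zero,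
      Complex.ofReal_one]
    ring
  rw [intervalIntegral.integral_comp_mul_left (fun t : ℝ => Complex.exp (↑t * Complex.I)) hk,
    mul_neg, integral_exp_mul_I_eq_sinc, Complex.real_smul]
  have hk' : (k : ℂ) ≠ 0 := by exact_mod_cast hk
  push_cast
  field_simp

lemma integral_exp_neg_mul_I_mul_eq_fourier (f : ℝ → ℂ) (t : ℝ) :
    ∫ x : ℝ, Complex.exp (-(t * x) * Complex.I) * f x = 𝓕 f (t / (2 * π)) := by
  rw [Real.fourier_real_eq_integral_exp_smul]
  congr 1 with x
  rw [smul_eq_mul]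
  congr 3
  push_cast
  field_simp

noncomputable def modulatedBox (c w : ℝ) : ℝ → ℂ :=
  (Icc (-w) w).indicator fun ξ => Complex.exp (↑(2 * π * c * ξ) * Complex.I)

lemma integrable_modulatedBox (c w : ℝ) : Integrable (modulatedBox c w) :=
  (integrable_indicator_iff measurableSet_Icc).2 <|
    (Continuous.continuousOn (by fun_prop)).integrableOn_compact isCompact_Icc

lemma norm_modulatedBox_le (c w ξ : ℝ) : ‖modulatedBox c w ξ‖ ≤ 1 := by
  unfold modulatedBox
  by_cases h : ξ ∈ Icc (-w) w
  · rw [indicator_of_mem h, Complex.norm_exp_ofReal_mul_I]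
  · rw [indicator_of_notMem h, norm_zero]; exact zero_le_one

lemma continuousAt_modulatedBox (c : ℝ) {w ξ : ℝ} (hw : 0 ≤ w) (h₁ : ξ ≠ -w) (h₂ : ξ ≠ w) :
    ContinuousAt (modulatedBox c w) ξ :=
  (Continuous.continuousOn (by fun_prop)).continuousAt_indicator <| by
    rw [frontier_Icc (by linarith)]; simp [h₁, h₂]

lemma support_modulatedBox_subset (c w : ℝ) : Function.support (modulatedBox c w) ⊆ Icc (-w) w :=
  support_indicator_subset

lemma fourier_modulatedBox (c : ℝ) {w : ℝ} (hw : 0 ≤ w) (x : ℝ) :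
    𝓕 (modulatedBox c w) x = ↑(2 * w * sinc (2 * π * w * (x - c))) := by
  have hintegrand : (fun ξ : ℝ => Complex.exp (↑(-2 * π * ξ * x) * Complex.I) •
      modulatedBox c w ξ)
        = (Icc (-w) w).indicator fun ξ => Complex.exp (↑(2 * π * (c - x) * ξ) * Complex.I) := by
    ext ξ
    by_cases h : ξ ∈ Icc (-w) w
    · rw [modulatedBox, indicator_of_mem h, indicator_of_mem h, smul_eq_mul, ← Complex.exp_add]
      push_cast; ring_nf
    · rw [modulatedBox, indicator_of_notMem h, indicator_of_notMem h, smul_zero]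
  rw [Real.fourier_real_eq_integral_exp_smul, hintegrand, integral_indicator measurableSet_Icc, integral_Icc_eq_integral_Ioc,
    ← intervalIntegral.integral_of_le (by linarith), integral_exp_const_mul_mul_I_eq_sinc,
    ← sinc_neg]
  push_cast; ring_nf

lemma modulatedBox_mul_modulatedBox_neg (a b w ξ : ℝ) :
    modulatedBox a w ξ * modulatedBox b w (-ξ) = modulatedBox (a - b) w ξ := by
  by_cases h : ξ ∈ Icc (-w) w
  · have h' : -ξ ∈ Icc (-w) w := by rw [mem_Icc] at h ⊢; constructor <;> linarith [h.1, h.2]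
    simp only [modulatedBox, indicator_of_mem h, indicator_of_mem h', ← Complex.exp_add]
    push_cast; ring_nf
  · simp [modulatedBox, indicator_of_notMem h]

lemma continuous_convolution_modulatedBox {f : ℝ → ℂ} (hf : Integrable f) (b : ℝ) {w : ℝ}
    (hw : 0 ≤ w) : Continuous (f ⋆[ContinuousLinearMap.mul ℂ ℂ] modulatedBox b w) := by
  have hmeas : Measurable (modulatedBox b w) :=
    Measurable.indicator (by fun_prop) measurableSet_Icc
  refine continuous_iff_continuousAt.2 fun u₀ => ?_
  -- The box has only two jumps, so the integrand is continuous in `u` for almost every `t`.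
  refine continuousAt_of_dominated (bound := fun t => ‖f t‖) ?_ ?_ hf.norm ?_
  · exact .of_forall fun u =>
      hf.aestronglyMeasurable.mul (hmeas.comp (by fun_prop)).aestronglyMeasurable
  · refine .of_forall fun u => .of_forall fun t => ?_
    rw [ContinuousLinearMap.mul_apply', norm_mul]
    exact mul_le_of_le_one_right (norm_nonneg _) (norm_modulatedBox_le b w _)
  · filter_upwards [volume.ae_ne (u₀ + w), volume.ae_ne (u₀ - w)] with t h₁ h₂
    have hc : ContinuousAt (modulatedBox b w) (u₀ - t) :=
      continuousAt_modulatedBox b hw (by contrapose! h₁; linarith) (by contrapose! h₂; linarith)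
    have hsub : ContinuousAt (fun u => u - t) u₀ := by fun_prop
    exact continuousAt_const.mul (hc.comp_of_eq hsub rfl)

lemma convolution_modulatedBox_eq_zero (a b : ℝ) {w u : ℝ} (hu : 2 * w < |u|) :
    (modulatedBox a w ⋆[ContinuousLinearMap.mul ℂ ℂ] modulatedBox b w) u = 0 := by
  refine Function.notMem_support.1 fun hmem => hu.not_ge ?_
  have := Set.Icc_add_Icc_subset _ _ _ _ <| Set.add_subset_add (support_modulatedBox_subset a w)
    (support_modulatedBox_subset b w) (support_convolution_subset _ hmem)
  rw [abs_le]; constructor <;> linarith [this.1, this.2]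

lemma convolution_modulatedBox_apply_zero (a b : ℝ) {w : ℝ} (hw : 0 ≤ w) :
    (modulatedBox a w ⋆[ContinuousLinearMap.mul ℂ ℂ] modulatedBox b w) 0
      = ↑(2 * w * sinc (2 * π * w * (b - a))) := by
  have h := fourier_modulatedBox (a - b) hw 0
  simp only [Real.fourier_real_eq_integral_exp_smul, mul_zero, Complex.ofReal_zero, zero_mul,
    Complex.exp_zero, one_smul] at h
  simp only [convolution_def, ContinuousLinearMap.mul_apply', zero_sub,
    modulatedBox_mul_modulatedBox_neg, h]
  ring_nf

noncomputable def sincProduct (w a b : ℝ) (x : ℝ) : ℝ :=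
  (2 * w) ^ 2 * (sinc (2 * π * w * (x - a)) * sinc (2 * π * w * (x - b)))

lemma continuous_sincProduct (w a b : ℝ) : Continuous (sincProduct w a b) := by
  unfold sincProduct; fun_prop

lemma integrable_sincProduct {w : ℝ} (hw : w ≠ 0) (a b : ℝ) : Integrable (sincProduct w a b) :=
  (integrable_sinc_mul_sinc (by positivity) a b).const_mul _

lemma fourier_convolution_modulatedBox (a b : ℝ) {w : ℝ} (hw : 0 ≤ w) :
    𝓕 (modulatedBox a w ⋆[ContinuousLinearMap.mul ℂ ℂ] modulatedBox b w)
      = fun x => (sincProduct w a b x : ℂ) := by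
  ext x
  rw [Real.fourier_mul_convolution_eq (integrable_modulatedBox a w) (integrable_modulatedBox b w),
    fourier_modulatedBox a hw, fourier_modulatedBox b hw, sincProduct]
  push_cast; ring

lemma fourier_sincProduct (a b : ℝ) {w : ℝ} (hw : 0 < w) (ξ : ℝ) :
    𝓕 (fun x => (sincProduct w a b x : ℂ)) ξ
      = (modulatedBox a w ⋆[ContinuousLinearMap.mul ℂ ℂ] modulatedBox b w) (-ξ) := by
  have hconv := (integrable_modulatedBox a w).integrable_convolution
    (ContinuousLinearMap.mul ℂ ℂ) (integrable_modulatedBox b w)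
  have hinv := (continuous_convolution_modulatedBox (integrable_modulatedBox a w) b hw.le)
    |>.fourierInv_fourier_eq hconv
  rw [fourier_convolution_modulatedBox a b hw.le] at hinv
  rw [← hinv (integrable_sincProduct hw.ne' a b).ofReal, Real.fourierInv_eq_fourier_neg, neg_neg]

lemma memB1_sincProduct (a b : ℝ) {w : ℝ} (hw : 0 < w) :
    MemB1 (4 * π * w) (sincProduct w a b) := by
  refine ⟨continuous_sincProduct w a b, integrable_sincProduct hw.ne' a b, fun t ht => ?_⟩
  rw [integral_exp_neg_mul_I_mul_eq_fourier, fourier_sincProduct a b hw]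
  refine convolution_modulatedBox_eq_zero a b ?_
  rw [abs_neg, abs_div, abs_of_pos (by positivity : (0 : ℝ) < 2 * π), lt_div_iff₀ (by positivity)]
  linarith

lemma integral_sincProduct_eq_zero {a b w : ℝ} (hw : 0 < w) (hab : 2 * w * (b - a) = 1) :
    ∫ x, sincProduct w a b x = 0 := by
  have h := integral_exp_neg_mul_I_mul_eq_fourier (fun x => (sincProduct w a b x : ℂ)) 0
  rw [zero_div, fourier_sincProduct a b hw, neg_zero, convolution_modulatedBox_apply_zero a b hw.le,
    show 2 * π * w * (b - a) = π by linear_combination π * hab, sinc_of_ne_zero pi_ne_zero,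
    sin_pi] at h
  simp only [Complex.ofReal_zero, zero_mul, neg_zero, Complex.exp_zero, one_mul,
    zero_div, mul_zero] at h
  exact_mod_cast h

lemma sincProduct_eq {a b w : ℝ} (hab : 2 * w * (b - a) = 1) (x : ℝ) :
    sincProduct w a b x
      = (2 * w) ^ 2 * (sinc (2 * π * w * (x - a)) * sinc (2 * π * w * (x - a) - π)) := by
  rw [sincProduct, show 2 * π * w * (x - b) = 2 * π * w * (x - a) - π by
    linear_combination -π * hab]

lemma sincProduct_nonpos {a b w x : ℝ} (hw : 0 < w) (hab : 2 * w * (b - a) = 1)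
    (hx : x ∉ Ioo a b) : sincProduct w a b x ≤ 0 := by
  rw [sincProduct_eq hab]
  refine mul_nonpos_of_nonneg_of_nonpos (sq_nonneg _) (sinc_mul_sinc_sub_pi_nonpos fun hy => hx ?_)
  have hk : 0 < 2 * π * w := by positivity
  have hxb : 2 * π * w * (x - a) < 2 * π * w * (b - a) := by linear_combination hy.2 - π * hab
  exact ⟨by linarith [pos_of_mul_pos_right hy.1 hk.le], by linarith [lt_of_mul_lt_mul_left hxb hk.le]⟩

lemma sincProduct_midpoint_pos {a b w : ℝ} (hw : 0 < w) (hab : 2 * w * (b - a) = 1) :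
    0 < sincProduct w a b ((a + b) / 2) := by
  rw [sincProduct_eq hab]
  refine mul_pos (by positivity) (sinc_mul_sinc_sub_pi_pos ⟨?_, ?_⟩) <;>
    nlinarith [pi_pos]

lemma MemB1.const_mul {σ : ℝ} {F : ℝ → ℝ} (hF : MemB1 σ F) (c : ℝ) :
    MemB1 σ fun x => c * F x := by
  obtain ⟨hcont, hint, hvanish⟩ := hF
  refine ⟨continuous_const.mul hcont, hint.const_mul c, fun t ht => ?_⟩
  simp_rw [Complex.ofReal_mul, mul_left_comm _ (c : ℂ)]
  rw [integral_const_mul, hvanish t ht, mul_zero]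

lemma integrable_exp_mul_ofReal {f : ℝ → ℝ} (hf : Integrable f) (t : ℝ) :
    Integrable fun x : ℝ => Complex.exp (-(t * x) * Complex.I) * (f x : ℂ) :=
  hf.ofReal.bdd_mul (c := 1) (by fun_prop) <| .of_forall fun x => by
    rw [Complex.norm_exp]; simp

lemma charFunOfDensity_sub_of_memB1 {σ : ℝ} {φ G : ℝ → ℝ} (hφ : Integrable φ) (hG : MemB1 σ G)
    {t : ℝ} (ht : σ < |t|) : charFunOfDensity (fun x => φ x - G x) t = charFunOfDensity φ t := by
  simp_rw [charFunOfDensity, Complex.ofReal_sub, mul_sub]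
  rw [integral_sub (integrable_exp_mul_ofReal hφ t) (integrable_exp_mul_ofReal hG.2.1 t),
    hG.2.2 t ht, sub_zero]

lemma IsProbDensity.sub {φ G : ℝ → ℝ} (hφ : IsProbDensity φ) (hG : Integrable G)
    (hG0 : ∫ x, G x = 0) (hle : ∀ x, G x ≤ φ x) : IsProbDensity fun x => φ x - G x :=
  ⟨hφ.1.sub hG, .of_forall fun x => sub_nonneg.2 (hle x), by
    rw [integral_sub hφ.1 hG, hG0, sub_zero, hφ.2.2]⟩

lemma IsCompact.exists_pos_mul_le {X : Type*} [TopologicalSpace X] {K : Set X}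
    (hK : IsCompact K) {φ P : X → ℝ} (hφ : ContinuousOn φ K) (hP : ContinuousOn P K)
    (hpos : ∀ x ∈ K, 0 < φ x) (hφ0 : ∀ x ∉ K, 0 ≤ φ x) (hneg : ∀ x ∉ K, P x ≤ 0) :
    ∃ ε > 0, ∀ x, ε * P x ≤ φ x := by
  obtain ⟨m, hm, hmφ⟩ := hK.exists_forall_le' hφ hpos
  obtain ⟨M, hM⟩ := hK.bddAbove_image hP
  refine ⟨m / (max M 0 + 1), by positivity, fun x => ?_⟩
  by_cases hx : x ∈ K
  · calc m / (max M 0 + 1) * P x ≤ m / (max M 0 + 1) * (max M 0 + 1) := by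
          gcongr; exact (hM (mem_image_of_mem P hx)).trans (le_max_left M 0) |>.trans (by linarith)
      _ = m := div_mul_cancel₀ m (by positivity)
      _ ≤ φ x := hmφ x hx
  · exact (mul_nonpos_of_nonneg_of_nonpos (by positivity) (hneg x hx)).trans (hφ0 x hx)

lemma Continuous.nonneg_of_ae_nonneg {X : Type*} [TopologicalSpace X] [MeasurableSpace X]
    {μ : Measure X} [μ.IsOpenPosMeasure] {f : X → ℝ} (hf : Continuous f)
    (h : ∀ᵐ x ∂μ, 0 ≤ f x) (x : X) : 0 ≤ f x :=
  (isClosed_le continuous_const hf).closure_subset (Measure.dense_of_ae h x)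

theorem exists_perturbation_of_memB1 {σ : ℝ} {φ P : ℝ → ℝ} (hφ : IsProbDensity φ)
    (hcont : Continuous φ) {K : Set ℝ} (hK : IsCompact K) (hpos : ∀ x ∈ K, 0 < φ x)
    (hP : MemB1 σ P) (hP0 : ∫ x, P x = 0) (hneg : ∀ x ∉ K, P x ≤ 0) (hne : ∃ x, P x ≠ 0) :
    ∃ G : ℝ → ℝ, MemB1 σ G ∧ (∃ x, G x ≠ 0) ∧ (∫ x, G x) = 0 ∧
      (∀ x : ℝ, G x ≤ φ x) ∧
      IsProbDensity (fun x => φ x - G x) ∧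
      ∀ t : ℝ, σ < |t| →
        charFunOfDensity (fun x => φ x - G x) t = charFunOfDensity φ t := by
  obtain ⟨ε, hε, hle⟩ := hK.exists_pos_mul_le hcont.continuousOn
    hP.1.continuousOn hpos (fun x _ => hcont.nonneg_of_ae_nonneg hφ.2.1 x) hneg
  have hG := hP.const_mul ε
  have hG0 : ∫ x, ε * P x = 0 := by rw [integral_const_mul, hP0, mul_zero]
  obtain ⟨x₀, hx₀⟩ := hne
  exact ⟨_, hG, ⟨x₀, mul_ne_zero hε.ne' hx₀⟩, hG0, hle, hφ.sub hG.2.1 hG0 hle,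
    fun t ht => charFunOfDensity_sub_of_memB1 hφ.1 hG ht⟩

theorem exists_memB1_perturbation_of_pos_on_long_interval_general
    (σ : ℝ) (hσ : 0 < σ) (φ : ℝ → ℝ) (hφ : IsProbDensity φ) (hcont : Continuous φ)
    (α β : ℝ) (hlen : 2 * π / σ < β - α)
    (hpos : ∀ x ∈ Ioo α β, 0 < φ x) :
    ∃ G : ℝ → ℝ, MemB1 σ G ∧ (∃ x, G x ≠ 0) ∧ (∫ x, G x) = 0 ∧
      (∀ x : ℝ, G x ≤ φ x) ∧
      IsProbDensity (fun x => φ x - G x) ∧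
      ∀ t : ℝ, σ < |t| →
        charFunOfDensity (fun x => φ x - G x) t = charFunOfDensity φ t := by
  set a := (α + β) / 2 - π / σ with ha
  set b := (α + β) / 2 + π / σ with hb
  set w := σ / (4 * π) with hw_def
  have hw : 0 < w := by positivity
  have hab : 2 * w * (b - a) = 1 := by rw [ha, hb, hw_def]; field_simp; ring
  have hσw : 4 * π * w = σ := by rw [hw_def]; field_simp
  have hhalf : 2 * (π / σ) < β - α := by rwa [mul_div_assoc']
  have hP := memB1_sincProduct a b hw
  rw [hσw] at hP
  refine exists_perturbation_of_memB1 hφ hcont isCompact_Icc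
    (fun x hx => hpos x ⟨by linarith [hx.1, ha], by linarith [hx.2, hb]⟩) hP
    (integral_sincProduct_eq_zero hw hab)
    (fun x hx => sincProduct_nonpos hw hab fun h => hx (Ioo_subset_Icc_self h))
    ⟨(a + b) / 2, (sincProduct_midpoint_pos hw hab).ne'⟩

/-- construction step in Theorem 1.5. -/
theorem exists_memB1_perturbation_of_pos_on_long_interval
    (σ : ℝ) (hσ : 0 < σ) (φ : ℝ → ℝ) (hφ : IsProbDensity φ) (hcont : Continuous φ)
    (α β : ℝ) (hαβ : α < β) (hlen : 2 * π / σ < β - α)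
    (hpos : ∀ x ∈ Ioo α β, 0 < φ x) :
    ∃ G : ℝ → ℝ, MemB1 σ G ∧ (∃ x, G x ≠ 0) ∧ (∫ x, G x) = 0 ∧
      (∀ x : ℝ, G x ≤ φ x) ∧
      IsProbDensity (fun x => φ x - G x) ∧
      ∀ t : ℝ, σ < |t| →
        charFunOfDensity (fun x => φ x - G x) t = charFunOfDensity φ t :=
  exists_memB1_perturbation_of_pos_on_long_interval_general σ hσ φ hφ hcont α β hlen hpos
end
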